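/- Let E be a real inner product space with norm ‖·‖, let M > 0, and let B : E × E → ℝ be a symmetric bilinear form with |B(u, v)| ≤ M ‖u‖ ‖v‖ for all u, v ∈ E. Let ℓ₁, ℓ₂ : E → ℝ be linear maps with |ℓ₁(u)| ≤ M ‖u‖ and |ℓ₂(u)| ≤ M ‖u‖ for all u, and let v₁ ∈ E satisfy ℓ₁(v₁) = 1, ℓ₂(v₁) = 0, and ‖v₁‖ ≤ M. Suppose C > 0 is such that B(f, f) ≥ C ‖f‖² for every f ∈ E with ℓ₁(f) = 0 and ℓ₂(f) = 0. Then for every K > 0 there exist constants C₂ > 0 and C₃ ≥ 0 such that for every u ∈ E with ‖u‖ ≤ 1/2, ℓ₂(u) = 0, and |ℓ₁(u)| ≤ K ‖u‖², one has B(u, u) ≥ C₂ ‖u‖² − C₃ ‖u‖³. -/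

import Mathlib

/-!
Write `u = (u - y) + y` with `y = ℓ₁(u) v₁`. The correction `u - y` lies in the doubly
constrained subspace, where `B` is coercive, and `‖y‖ ≤ K M ‖u‖²` is quadratically small,
so replacing `u` by `u - y` costs only cubic terms both in `‖·‖²` and in `B(·,·)`.
-/

lemma sq_norm_sub_two_mul_norm_mul_le_norm_sub_sq {E : Type*} [SeminormedAddCommGroup E]
    (u y : E) : ‖u‖ ^ 2 - 2 * ‖y‖ * ‖u‖ ≤ ‖u - y‖ ^ 2 := by
  have hdist : ‖u‖ - ‖y‖ ≤ ‖u - y‖ := norm_sub_norm_le u y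
  rcases le_total ‖y‖ ‖u‖ with hyu | huy
  · nlinarith [pow_le_pow_left₀ (sub_nonneg.mpr hyu) hdist 2, sq_nonneg ‖y‖]
  · nlinarith [norm_nonneg u, sq_nonneg ‖u - y‖]

section BoundedBilinear

variable {E : Type*} [SeminormedAddCommGroup E] [Module ℝ E]
  {B : E →ₗ[ℝ] E →ₗ[ℝ] ℝ} {M : ℝ}

lemma apply_sub_self_le_of_abs_le (hB : ∀ u v : E, |B u v| ≤ M * ‖u‖ * ‖v‖) (u y : E) :
    B (u - y) (u - y) ≤ B u u + ‖y‖ * M * (2 * ‖u‖ + ‖y‖) := by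
  simp only [map_sub, LinearMap.sub_apply]
  linarith [(abs_le.mp (hB u y)).1, (abs_le.mp (hB y u)).1, (abs_le.mp (hB y y)).2]

lemma sub_le_apply_self_of_coercive_sub (hB : ∀ u v : E, |B u v| ≤ M * ‖u‖ * ‖v‖)
    (hM : 0 ≤ M) {C δ : ℝ} (hC : 0 ≤ C) {u y : E} (hy : ‖y‖ ≤ δ)
    (hcoer : C * ‖u - y‖ ^ 2 ≤ B (u - y) (u - y)) :
    C * ‖u‖ ^ 2 - δ * (2 * (C + M) * ‖u‖ + M * δ) ≤ B u u := by
  have hnorm := mul_le_mul_of_nonneg_left (sq_norm_sub_two_mul_norm_mul_le_norm_sub_sq u y) hC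
  have hB' := apply_sub_self_le_of_abs_le hB u y
  have hy0 : 0 ≤ ‖y‖ := norm_nonneg y
  have hu0 : 0 ≤ ‖u‖ := norm_nonneg u
  nlinarith [mul_le_mul_of_nonneg_left hy (mul_nonneg hC hu0),
    mul_le_mul_of_nonneg_left hy (mul_nonneg hM hu0),
    mul_le_mul hy hy hy0 (hy0.trans hy), mul_nonneg hM hy0]

end BoundedBilinear

theorem stmt_11 (E : Type*) [NormedAddCommGroup E] [InnerProductSpace ℝ E]
    (M : ℝ)
    (B : E →ₗ[ℝ] E →ₗ[ℝ] ℝ)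
    (hBbdd : ∀ u v : E, |B u v| ≤ M * ‖u‖ * ‖v‖)
    (ℓ₁ ℓ₂ : E →ₗ[ℝ] ℝ)
    (v₁ : E) (hv₁ℓ₁ : ℓ₁ v₁ = 1) (hv₁ℓ₂ : ℓ₂ v₁ = 0) (hv₁norm : ‖v₁‖ ≤ M)
    (C : ℝ) (hC : 0 < C)
    (hcoer : ∀ f : E, ℓ₁ f = 0 → ℓ₂ f = 0 → B f f ≥ C * ‖f‖ ^ 2) :
    ∀ K : ℝ, 0 < K →
      ∃ C₂ C₃ : ℝ, 0 < C₂ ∧ 0 ≤ C₃ ∧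
        ∀ u : E, ‖u‖ ≤ 1 / 2 → ℓ₂ u = 0 → |ℓ₁ u| ≤ K * ‖u‖ ^ 2 →
          B u u ≥ C₂ * ‖u‖ ^ 2 - C₃ * ‖u‖ ^ 3 := by
  intro K hK
  have hM : 0 ≤ M := (norm_nonneg v₁).trans hv₁norm
  refine ⟨C, 2 * K * M * (C + M) + K ^ 2 * M ^ 3, hC, by positivity, ?_⟩
  intro u hu hℓ₂u hℓ₁u
  have hy : ‖ℓ₁ u • v₁‖ ≤ K * M * ‖u‖ ^ 2 := by
    rw [norm_smul, Real.norm_eq_abs, mul_right_comm]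
    exact mul_le_mul hℓ₁u hv₁norm (norm_nonneg v₁) (by positivity)
  have hcoer_sub := hcoer (u - ℓ₁ u • v₁) (by simp [hv₁ℓ₁]) (by simp [hv₁ℓ₂, hℓ₂u])
  have hbound := sub_le_apply_self_of_coercive_sub hBbdd hM hC.le hy hcoer_sub
  have hu4 : ‖u‖ ^ 4 ≤ ‖u‖ ^ 3 :=
    pow_le_pow_of_le_one (norm_nonneg u) (by linarith) (by norm_num)
  nlinarith [mul_le_mul_of_nonneg_left hu4 (by positivity : (0 : ℝ) ≤ K ^ 2 * M ^ 3)]
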